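/- arXiv:1801.05129 — 2 statements merged into one kernel-verified Lean document; each statement's English description precedes it below -/
import Mathlib

section
/- Let X be a finite nonempty subset of ℤ^n and let d be the dimension of the affine hull of X in ℚ^n. Then the doubling 2X = {a + b : a, b ∈ X} satisfies |2X| ≥ (d+1)|X| − (d+1 choose 2). -/
open Finset Pointwise Module

/-!
Order `ℤ^n` lexicographically, so that addition is strictly monotone, and induct on `|X|` by
removing the smallest element `v`; write `A = X \ {v}`. The sums `v + v` and `v + x` for the
"fresh partners" `x ∈ A` with `v + x ∉ A + A` all lie in `2X \ 2A`.

If the dimension does not drop, the differences from `v` to the fresh partners span the affine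
hull of `X`: a non-fresh `a ∈ A` has `v + a = b + c` with `b, c ∈ A`, hence `b, c < a` and
`a - v = (b - v) + (c - v)`, so induction along the order reduces `a` to fresh partners. This
gives at least `d + 1` new sums. If the dimension drops by one, `v` is off the affine hull of `A`,
so `v + x = b + c` is impossible for every `x ∈ A` and all `|X|` sums `v + x` are new.
The linear algebra only sees the image of `X` under an additive map, so the argument runs in any
linearly ordered cancellative monoid mapping additively into a vector space.
-/

def freshPartners {G : Type*} [Add G] [DecidableEq G] (v : G) (A : Finset G) : Finset G :=
  {x ∈ A | v + x ∉ A + A}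

section

variable {G V K : Type*} [AddCommMonoid G] [DecidableEq G] [Ring K] [AddCommGroup V] [Module K V]

lemma freshPartners_eq_self_of_notMem_affineSpan (f : G →+ V) {v : G} {A : Finset G}
    (hnot : f v ∉ affineSpan K (f '' A)) : freshPartners v A = A := by
  refine filter_true_of_mem fun x hx hmem => hnot ?_
  obtain ⟨b, hb, c, hc, hbc⟩ := mem_add.1 hmem
  have hfv : f v = (f b -ᵥ f x) +ᵥ f c := by
    have hsum : f v + f x = f b + f c := by simp only [← map_add, hbc]
    rw [vsub_eq_sub, vadd_eq_add, eq_sub_of_add_eq hsum]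
    abel
  rw [hfv]
  refine AffineSubspace.vadd_mem_of_mem_direction ?_ (subset_affineSpan K _ ⟨c, hc, rfl⟩)
  rw [direction_affineSpan]
  exact vsub_mem_vectorSpan K ⟨b, hb, rfl⟩ ⟨x, hx, rfl⟩

end

section

variable {G V K : Type*} [AddCommMonoid G] [LinearOrder G] [IsOrderedCancelAddMonoid G]
  [AddCommGroup V]

lemma card_add_self_add_card_freshPartners_lt {v : G} {A : Finset G} (hv : ∀ x ∈ A, v < x) :
    #(A + A) + #(freshPartners v A) < #(insert v A + insert v A) := by
  have hdisj : Disjoint (A + A) ((insert v (freshPartners v A)).image (v + ·)) := by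
    refine disjoint_right.2 ?_
    simp only [mem_image, mem_insert, forall_exists_index, and_imp]
    rintro _ x (rfl | hx) rfl hmem
    · obtain ⟨b, hb, c, hc, hbc⟩ := mem_add.1 hmem
      exact (add_lt_add (hv b hb) (hv c hc)).ne' hbc
    · exact (mem_filter.1 hx).2 hmem
  have hsub : A + A ∪ (insert v (freshPartners v A)).image (v + ·) ⊆ insert v A + insert v A := by
    refine union_subset (add_subset_add (subset_insert v A) (subset_insert v A)) ?_
    refine image_subset_iff.2 fun x hx => add_mem_add (mem_insert_self v A) ?_
    exact insert_subset_insert v (filter_subset _ A) hx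
  have hv_notMem : v ∉ freshPartners v A := fun h => (hv v (mem_filter.1 h).1).false
  calc #(A + A) + #(freshPartners v A) < #(A + A) + #(insert v (freshPartners v A)) := by
        rw [card_insert_of_notMem hv_notMem]; omega
    _ = #(A + A ∪ (insert v (freshPartners v A)).image (v + ·)) := by
        rw [card_union_of_disjoint hdisj, card_image_of_injective _ (add_right_injective v)]
    _ ≤ #(insert v A + insert v A) := card_le_card hsub

lemma sub_mem_span_freshPartners [Semiring K] [Module K V] (f : G →+ V) {v a : G}
    {A : Finset G} (hv : ∀ x ∈ A, v < x) (ha : a ∈ A) :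
    f a - f v ∈ Submodule.span K ((fun x => f x - f v) '' freshPartners v A) := by
  refine (A.finite_toSet.wellFoundedOn (r := (· < ·))).induction (mem_coe.2 ha)
    (P := fun a => f a - f v ∈ Submodule.span K _) fun a ha ih => ?_
  by_cases hQ : v + a ∈ A + A
  · obtain ⟨b, hb, c, hc, hbc⟩ := mem_add.1 hQ
    have hba : b < a := lt_of_add_lt_add_left (a := v) <| by
      rw [← hbc, add_comm v b]; gcongr; exact hv c hc
    have hca : c < a := lt_of_add_lt_add_left (a := v) <| by
      rw [← hbc]; gcongr; exact hv b hb
    have hsplit : f a - f v = (f b - f v) + (f c - f v) := by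
      have hsum : f v + f a = f b + f c := by simp only [← map_add, hbc]
      rw [eq_sub_of_add_eq' hsum]
      abel
    rw [hsplit]
    exact add_mem (ih b hb hba) (ih c hc hca)
  · exact Submodule.subset_span ⟨a, mem_filter.2 ⟨mem_coe.1 ha, hQ⟩, rfl⟩

variable [DivisionRing K] [Module K V]

lemma finrank_vectorSpan_insert_le_card_freshPartners (f : G →+ V) {v : G} {A : Finset G}
    (hv : ∀ x ∈ A, v < x) :
    finrank K (vectorSpan K (f '' ↑(insert v A))) ≤ #(freshPartners v A) := by
  classical
  have hspan : vectorSpan K (f '' ↑(insert v A)) ≤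
      Submodule.span K ((freshPartners v A).image (fun x => f x - f v) : Set V) := by
    rw [coe_image, vectorSpan_eq_span_vsub_set_right K (Set.mem_image_of_mem f (mem_insert_self v A)),
      Submodule.span_le, Set.image_image, Set.image_subset_iff]
    intro x hx
    rcases mem_insert.1 hx with rfl | hxA
    · simp
    · exact sub_mem_span_freshPartners f hv hxA
  calc finrank K (vectorSpan K (f '' ↑(insert v A)))
      ≤ finrank K (Submodule.span K ((freshPartners v A).image (fun x => f x - f v) : Set V)) :=
        Submodule.finrank_mono hspan
    _ ≤ #((freshPartners v A).image fun x => f x - f v) := finrank_span_finset_le_card _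
    _ ≤ #(freshPartners v A) := card_image_le

theorem add_one_mul_card_sub_choose_le_card_add_self (f : G →+ V) (X : Finset G) :
    ((finrank K (vectorSpan K (f '' X)) + 1) * #X : ℤ) -
      ((finrank K (vectorSpan K (f '' X)) + 1).choose 2 : ℤ) ≤ #(X + X) := by
  induction X using Finset.induction_on_min with
  | empty => simp
  | insert v A hv ih =>
    have hcard : #(insert v A) = #A + 1 := card_insert_of_notMem fun h => (hv v h).false
    have hgrowth := card_add_self_add_card_freshPartners_lt hv
    have : FiniteDimensional K (vectorSpan K (f '' ↑(insert v A))) :=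
      finiteDimensional_vectorSpan_of_finite K ((insert v A).finite_toSet.image f)
    have hmono : finrank K (vectorSpan K (f '' A)) ≤
        finrank K (vectorSpan K (f '' ↑(insert v A))) :=
      Submodule.finrank_mono (vectorSpan_mono K (Set.image_mono (coe_subset.2 (subset_insert v A))))
    have hsucc : finrank K (vectorSpan K (f '' ↑(insert v A))) ≤
        finrank K (vectorSpan K (f '' A)) + 1 := by
      rw [coe_insert, Set.image_insert_eq]
      exact finrank_vectorSpan_insert_le_set K _ _
    rcases hmono.eq_or_lt with hsame | hup
    · have hfresh := finrank_vectorSpan_insert_le_card_freshPartners (K := K) f hv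
      rw [← hsame] at hfresh ⊢
      rw [hcard]
      push_cast
      linarith
    · have hnot : f v ∉ affineSpan K (f '' A) := fun h => by
        rw [coe_insert, Set.image_insert_eq, vectorSpan_insert_eq_vectorSpan h] at hup
        exact hup.false
      rw [freshPartners_eq_self_of_notMem_affineSpan f hnot] at hgrowth
      rw [show finrank K (vectorSpan K (f '' ↑(insert v A))) =
          finrank K (vectorSpan K (f '' A)) + 1 by omega,
        hcard, Nat.choose_succ_succ, Nat.choose_one_right]
      push_cast at ih hgrowth ⊢
      linarith

end

theorem freiman_doubling_general (n : ℕ) (X : Finset (Fin n → ℤ)) (d : ℕ)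
    (hd : d = Module.finrank ℚ
      (vectorSpan ℚ ((fun v : Fin n → ℤ => fun i => (v i : ℚ)) '' (X : Set (Fin n → ℤ))))) :
    ((d + 1) * X.card : ℤ) - ((d + 1).choose 2 : ℤ) ≤ ((X + X).card : ℤ) := by
  subst hd
  let ι : (Fin n → ℤ) ≃+ Lex (Fin n → ℤ) := { toLex with map_add' := fun _ _ => rfl }
  let f : Lex (Fin n → ℤ) →+ (Fin n → ℚ) :=
    ((Int.castAddHom ℚ).compLeft (Fin n)).comp ι.symm.toAddMonoidHom
  have h := add_one_mul_card_sub_choose_le_card_add_self (K := ℚ) f (X.image ι)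
  have hcoe : f '' (X.image ι : Set _) = (fun v i => (v i : ℚ)) '' (X : Set (Fin n → ℤ)) := by
    rw [coe_image, Set.image_image]; rfl
  rw [hcoe, card_image_of_injective _ ι.injective] at h
  refine h.trans (le_of_eq ?_)
  -- the sumset on the left is formed with the classical `DecidableEq` of the lex order
  rw [← card_image_of_injective (X + X) ι.injective, image_add ι]
  congr!

/-- **Freiman's theorem.** If `X` is a finite nonempty subset of `ℤ^n` and `d` is the
dimension of the affine hull of `X` (viewed in `ℚ^n`), then the doubling
`2X = {a + b : a, b ∈ X}` satisfies `|2X| ≥ (d+1)|X| − (d+1 choose 2)`. -/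
theorem freiman_doubling (n : ℕ) (X : Finset (Fin n → ℤ)) (hX : X.Nonempty) (d : ℕ)
    (hd : d = Module.finrank ℚ
      (vectorSpan ℚ ((fun v : Fin n → ℤ => fun i => (v i : ℚ)) '' (X : Set (Fin n → ℤ))))) :
    ((d + 1) * X.card : ℤ) - ((d + 1).choose 2 : ℤ) ≤ ((X + X).card : ℤ) :=
  freiman_doubling_general n X d hd
end

section
/- Let G be a finite simple graph. The edge ring K[G] = K[x_i x_j : {i,j} ∈ E(G)] is (isomorphic to) a polynomial ring over K — equivalently, the monomials x_i x_j for {i,j} ∈ E(G) are algebraically independent over K — if and only if each connected component of G contains at most one cycle, and this cycle is odd. -/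
namespace FreimanPaper

open MvPolynomial

variable {V : Type*}

/-- The quadratic monomial `x_i x_j` attached to an edge `e = {i, j}`. -/
noncomputable def edgeMonomial (K : Type*) [Field K] (e : Sym2 V) : MvPolynomial V K :=
  Sym2.lift ⟨fun i j => X i * X j, fun i j => mul_comm _ _⟩ e

/-- Every cycle of `G` is odd, and any two cycles lying in the same connected
component of `G` have the same edge set; i.e. each connected component of `G`
contains at most one cycle, and this cycle is odd. -/
def AtMostOneOddCyclePerComponent (G : SimpleGraph V) : Prop :=
  (∀ (u : V) (c : G.Walk u u), c.IsCycle → Odd c.length) ∧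
  (∀ (u v : V) (c : G.Walk u u) (c' : G.Walk v v), c.IsCycle → c'.IsCycle →
    G.Reachable u v → ∀ e, e ∈ c.edges ↔ e ∈ c'.edges)

end FreimanPaper


/-!
Monomials are algebraically independent exactly when their exponent vectors are linearly
independent over `ℕ`, equivalently over `ℤ`; for the monomials `x_i x_j` these vectors are the
columns of the incidence matrix of `G`. An even cycle, or two different odd cycles joined by a
walk, yield a nonzero integer relation among the columns by giving the edges of each walk
alternating signs. Conversely, the edges carrying a nonzero relation form a graph without leaves,
which therefore contains a cycle. If every component of `G` has only one cycle, no other edge of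
the relation can touch that cycle, so the relation alternates in sign around it, which is
impossible when the cycle is odd.
-/

open Finsupp MvPolynomial

theorem MvPolynomial.aeval_monomial_one_eq_mapDomainAlgHom {ι σ R : Type*} [CommSemiring R]
    (f : ι → σ →₀ ℕ) :
    aeval (fun i => monomial (f i) (1 : R)) =
      AddMonoidAlgebra.mapDomainAlgHom R R (linearCombination ℕ f).toAddMonoidHom := by
  refine MvPolynomial.algHom_ext fun i => ?_
  rw [aeval_X]
  simp [MvPolynomial, X, monomial]

theorem MvPolynomial.algebraicIndependent_monomial_iff {ι σ R : Type*} [CommRing R]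
    [Nontrivial R] (f : ι → σ →₀ ℕ) :
    AlgebraicIndependent R (fun i => monomial (f i) (1 : R)) ↔ LinearIndependent ℕ f := by
  rw [algebraicIndependent_iff_injective_aeval, aeval_monomial_one_eq_mapDomainAlgHom]
  refine ⟨fun h m₁ m₂ hm => ?_, fun h => AddMonoidAlgebra.mapDomain_injective h⟩
  simpa using @h (monomial m₁ 1) (monomial m₂ 1) (by simp [monomial, hm])

theorem linearIndependent_nat_iff_int {ι M : Type*} [AddCommGroup M] {v : ι → M} :
    LinearIndependent ℕ v ↔ LinearIndependent ℤ v := by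
  refine ⟨fun h => linearIndependent_iff'.mpr fun s g hg i hi => ?_,
    LinearIndependent.restrict_scalars' ℕ⟩
  have key : ∑ j ∈ s, (g j).toNat • v j = ∑ j ∈ s, (-g j).toNat • v j := by
    rw [← sub_eq_zero, ← Finset.sum_sub_distrib, ← hg]
    refine Finset.sum_congr rfl fun j _ => ?_
    rw [← natCast_zsmul, ← natCast_zsmul, ← sub_smul, Int.toNat_sub_toNat_neg]
  have := linearIndependent_iff'ₛ.mp h s _ _ key i hi
  omega

namespace SimpleGraph

variable {V : Type*} {G : SimpleGraph V}

theorem incMatrix_col_of_adj [DecidableEq V] [DecidableRel G.Adj] {R : Type*}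
    [NonAssocSemiring R] {a b : V} (h : G.Adj a b) :
    (G.incMatrix R).col s(a, b) = Pi.single a 1 + Pi.single b 1 := by
  ext x
  simp only [Matrix.col_apply, incMatrix_apply', mk'_mem_incidenceSet_iff, h, true_and]
  rcases eq_or_ne x a with rfl | hxa
  · simp [h.ne']
  · rcases eq_or_ne x b with rfl | hxb <;> simp [*]

namespace Walk

noncomputable def alternatingEdgeSum : {u v : V} → G.Walk u v → Sym2 V →₀ ℤ
  | _, _, nil => 0
  | u, _, cons (v := w) _ p => single s(u, w) 1 - p.alternatingEdgeSum

variable {u v : V}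

theorem alternatingEdgeSum_apply_of_notMem_edges (p : G.Walk u v) {e : Sym2 V}
    (he : e ∉ p.edges) : p.alternatingEdgeSum e = 0 := by
  induction p with
  | nil => rfl
  | cons h p ih =>
    rw [edges_cons, List.mem_cons, not_or] at he
    simp [alternatingEdgeSum, Ne.symm he.1, ih he.2]

theorem alternatingEdgeSum_mem_supported (p : G.Walk u v) :
    p.alternatingEdgeSum ∈ supported ℤ ℤ G.edgeSet := fun _ he =>
  p.edges_subset_edgeSet <| by_contra fun h =>
    Finsupp.mem_support_iff.mp he (p.alternatingEdgeSum_apply_of_notMem_edges h)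

theorem odd_alternatingEdgeSum_apply {p : G.Walk u v} (hp : p.edges.Nodup) {e : Sym2 V}
    (he : e ∈ p.edges) : Odd (p.alternatingEdgeSum e) := by
  induction p with
  | nil => simp at he
  | @cons u w v h p ih =>
    rw [edges_cons, List.nodup_cons] at hp
    rw [edges_cons, List.mem_cons] at he
    rcases he with rfl | he
    · simp [alternatingEdgeSum, p.alternatingEdgeSum_apply_of_notMem_edges hp.1]
    · have hne : e ≠ s(u, w) := fun h => hp.1 (h ▸ he)
      simpa [alternatingEdgeSum, single_apply, Ne.symm hne] using (ih hp.2 he).neg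

theorem linearCombination_incMatrix_col_alternatingEdgeSum [DecidableEq V]
    [DecidableRel G.Adj] (p : G.Walk u v) :
    linearCombination ℤ (G.incMatrix ℤ).col p.alternatingEdgeSum =
      Pi.single u 1 + (-1) ^ (p.length + 1) • Pi.single v 1 := by
  induction p with
  | nil => simp [alternatingEdgeSum]
  | cons h p ih =>
    rw [alternatingEdgeSum, map_sub, ih, linearCombination_single, one_smul,
      incMatrix_col_of_adj h, length_cons]
    module

end Walk

section Dependence

variable [DecidableEq V] [DecidableRel G.Adj]

theorem not_linearIndepOn_incMatrix_col_of_isCycle_of_even {u : V} {c : G.Walk u u}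
    (hc : c.IsCycle) (heven : Even c.length) :
    ¬ LinearIndepOn ℤ (G.incMatrix ℤ).col G.edgeSet := by
  rw [linearIndepOn_iff]
  push Not
  refine ⟨c.alternatingEdgeSum, c.alternatingEdgeSum_mem_supported, ?_, fun h0 => ?_⟩
  · rw [Walk.linearCombination_incMatrix_col_alternatingEdgeSum, heven.add_one.neg_one_pow]
    simp
  · have := Walk.odd_alternatingEdgeSum_apply hc.edges_nodup
      (Walk.mk_start_snd_mem_edges hc.not_nil)
    simp [h0] at this

theorem not_linearIndepOn_incMatrix_col_of_odd {u v : V} {c : G.Walk u u} {c' : G.Walk v v}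
    (hc : c.IsTrail) (hodd : Odd c.length) (hodd' : Odd c'.length) (hr : G.Reachable u v)
    {e : Sym2 V} (he : e ∈ c.edges) (he' : e ∉ c'.edges) :
    ¬ LinearIndepOn ℤ (G.incMatrix ℤ).col G.edgeSet := by
  obtain ⟨p⟩ := hr
  rw [linearIndepOn_iff]
  push Not
  -- the images of `c`, `c'` and `p` are `2u`, `2v` and `u ± v`
  refine ⟨c.alternatingEdgeSum + (-1) ^ (p.length + 1) • c'.alternatingEdgeSum -
      (2 : ℤ) • p.alternatingEdgeSum, ?_, ?_, fun h0 => ?_⟩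
  · exact sub_mem (add_mem c.alternatingEdgeSum_mem_supported
      (Submodule.smul_mem _ _ c'.alternatingEdgeSum_mem_supported))
      (Submodule.smul_mem _ _ p.alternatingEdgeSum_mem_supported)
  · simp only [map_sub, map_add, map_smul, Walk.linearCombination_incMatrix_col_alternatingEdgeSum,
      hodd.add_one.neg_one_pow, hodd'.add_one.neg_one_pow]
    module
  · have hodd_e := Walk.odd_alternatingEdgeSum_apply hc.edges_nodup he
    have h := congr($h0 e)
    simp only [Finsupp.coe_sub, Finsupp.coe_add, Finsupp.coe_smul, Finsupp.coe_zero,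
      Pi.sub_apply, Pi.add_apply, Pi.smul_apply, Pi.zero_apply,
      c'.alternatingEdgeSum_apply_of_notMem_edges he', smul_zero, add_zero, sub_eq_zero] at h
    rw [h, smul_eq_mul] at hodd_e
    exact Int.not_even_iff_odd.mpr hodd_e (even_two_mul _)

end Dependence

section Leafless

theorem IsAcyclic.exists_ne_existsUnique_adj [Finite G.edgeSet] (h : G.IsAcyclic) {x y : V}
    (hxy : G.Adj x y) : ∃ u v, u ≠ v ∧ (∃! w, G.Adj u w) ∧ ∃! w, G.Adj v w := by
  have : Nonempty V := ⟨x⟩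
  obtain ⟨u, v, p, hp, hmax⟩ := Walk.exists_isPath_forall_isPath_length_le_length G
  have hnil : ¬p.Nil := fun hn => by
    simpa [hn.length_eq_zero] using hmax _ _ hxy.toWalk (Walk.IsPath.mk' (by simp [hxy.ne]))
  refine ⟨u, v, hp.nil_iff_eq.not.mp hnil, ⟨_, p.adj_snd hnil, fun w hadj => ?_⟩,
    ⟨_, (p.adj_penultimate hnil).symm, fun w hadj => ?_⟩⟩
  · refine h.eq_snd_of_adj_start hp hadj (by_contra fun hw => ?_)
    simpa using hmax _ _ _ (hp.cons (h := hadj.symm) hw)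
  · refine h.eq_penultimate_of_adj_end hp hadj (by_contra fun hw => ?_)
    simpa using hmax _ _ _ (hp.concat hw hadj)

theorem not_isAcyclic_of_forall_ne_not_existsUnique_adj [Finite G.edgeSet] {x y : V}
    (hxy : G.Adj x y) (h : ∀ v ≠ x, ¬ ∃! w, G.Adj v w) : ¬ G.IsAcyclic := fun hG => by
  obtain ⟨u, v, huv, hu, hv⟩ := hG.exists_ne_existsUnique_adj hxy
  rcases eq_or_ne u x with rfl | hux
  · exact h v huv.symm hv
  · exact h u hux hu

theorem exists_isCycle_of_not_reachable_deleteEdges [Finite G.edgeSet]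
    (hleaf : ∀ v, ¬ ∃! w, G.Adj v w) {w x : V} (hwx : G.Adj w x)
    (hbr : ¬ (G.deleteEdges {s(w, x)}).Reachable w x) :
    ∃ (u : V) (c : G.Walk u u), c.IsCycle ∧
      ∀ a ∈ c.support, (G.deleteEdges {s(w, x)}).Reachable x a := by
  classical
  set G' := G.deleteEdges {s(w, x)}
  have hK : ∀ a b, (G'.connectedComponentMk x).toSimpleGraph.spanningCoe.Adj a b ↔
      G'.Reachable x a ∧ G'.Adj a b := fun a b => by
    rw [ConnectedComponent.adj_spanningCoe_toSimpleGraph, ConnectedComponent.mem_supp_iff,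
      ConnectedComponent.eq, reachable_comm]
  -- in the component `K` of `x` in `G'`, only `x` can be a leaf
  set K := (G'.connectedComponentMk x).toSimpleGraph.spanningCoe
  have hKG' : K ≤ G' := spanningCoe_induce_le _ _
  have hKG : K ≤ G := hKG'.trans (deleteEdges_le _)
  have : Finite K.edgeSet := (Set.toFinite G.edgeSet).subset (edgeSet_mono hKG)
  have hG' : ∀ {a b}, G.Adj a b → a ≠ w → a ≠ x → G'.Adj a b := fun hab haw hax => by
    simp [G', deleteEdges_adj, hab, haw, hax]
  obtain ⟨y, hxy, hyw⟩ : ∃ y, G.Adj x y ∧ y ≠ w := by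
    by_contra! h
    exact hleaf x ⟨w, hwx.symm, h⟩
  have hxyK : K.Adj x y :=
    (hK x y).mpr ⟨.refl x, by simp [G', deleteEdges_adj, hxy, hyw, hwx.ne']⟩
  have hcyc : ¬ K.IsAcyclic := not_isAcyclic_of_forall_ne_not_existsUnique_adj hxyK
    fun v hvx ⟨b, hvb, huniq⟩ => by
      have hxv := ((hK v b).mp hvb).1
      have hvw : v ≠ w := by rintro rfl; exact hbr hxv.symm
      exact hleaf v ⟨b, hKG hvb, fun c hvc => huniq c ((hK v c).mpr ⟨hxv, hG' hvc hvw hvx⟩)⟩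
  obtain ⟨u, c, hc⟩ : ∃ (u : V) (c : K.Walk u u), c.IsCycle := by simpa [IsAcyclic] using hcyc
  have hxu : G'.Reachable x u := ((hK _ _).mp (c.adj_snd hc.not_nil)).1
  refine ⟨u, c.mapLe hKG, (Walk.isCycle_mapLe hKG).mpr hc, fun a ha => ?_⟩
  rw [Walk.support_mapLe_eq_support] at ha
  exact hxu.trans (Reachable.mono hKG' ⟨c.takeUntil a ha⟩)

theorem mem_edges_of_adj_of_mem_support [Finite G.edgeSet] (hleaf : ∀ v, ¬ ∃! w, G.Adj v w)
    (huniq : ∀ (u v : V) (c : G.Walk u u) (c' : G.Walk v v), c.IsCycle → c'.IsCycle →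
      G.Reachable u v → ∀ e, e ∈ c.edges ↔ e ∈ c'.edges)
    {u : V} {c : G.Walk u u} (hc : c.IsCycle) {w x : V} (hw : w ∈ c.support)
    (hwx : G.Adj w x) : s(w, x) ∈ c.edges := by
  classical
  by_contra hnot
  have huw : G.Reachable u w := ⟨c.takeUntil w hw⟩
  by_cases hbr : (G.deleteEdges {s(w, x)}).Reachable w x
  · obtain ⟨u', c', hc', he'⟩ := adj_and_reachable_delete_edges_iff_exists_cycle.mp ⟨hwx, hbr⟩
    have hu'w : G.Reachable u' w := ⟨c'.takeUntil w (c'.fst_mem_support_of_mem_edges he')⟩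
    exact hnot ((huniq _ _ c c' hc hc' (huw.trans hu'w.symm) _).mpr he')
  · obtain ⟨u', c', hc', hreach⟩ := exists_isCycle_of_not_reachable_deleteEdges hleaf hwx hbr
    have huu' : G.Reachable u u' := huw.trans <| hwx.reachable.trans <|
      (hreach u' c'.start_mem_support).mono (deleteEdges_le _)
    have he := (huniq _ _ c c' hc hc' huu' _).mp (c.mk_start_snd_mem_edges hc.not_nil)
    have huw' : (G.deleteEdges {s(w, x)}).Reachable u w :=
      ⟨(c.toDeleteEdge _ hnot).takeUntil w (by simpa using hw)⟩
    exact hbr (huw'.symm.trans (hreach u (c'.fst_mem_support_of_mem_edges he)).symm)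

end Leafless

section Relations

variable {l : Sym2 V →₀ ℤ}

theorem exists_fromEdgeSet_adj_of_apply_ne_zero (hl : l ∈ supported ℤ ℤ G.edgeSet)
    {e : Sym2 V} (he : l e ≠ 0) {a : V} (ha : a ∈ e) :
    ∃ b, (fromEdgeSet (l.support : Set (Sym2 V))).Adj a b ∧ e = s(a, b) := by
  obtain ⟨b, rfl⟩ := Sym2.mem_iff_exists.mp ha
  have hab : G.Adj a b := hl (Finsupp.mem_support_iff.mpr he)
  exact ⟨b, (fromEdgeSet_adj _).mpr ⟨Finsupp.mem_support_iff.mpr he, hab.ne⟩, rfl⟩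

variable [DecidableEq V] [DecidableRel G.Adj]

theorem linearCombination_incMatrix_col_apply (hl : l ∈ supported ℤ ℤ G.edgeSet) (a : V)
    {s : Finset (Sym2 V)} (hs : ∀ e, l e ≠ 0 → a ∈ e → e ∈ s) (has : ∀ e ∈ s, a ∈ e) :
    linearCombination ℤ (G.incMatrix ℤ).col l a = ∑ e ∈ s, l e := by
  have hterm : ∀ e ∈ l.support,
      (l e • (G.incMatrix ℤ).col e) a = if a ∈ e then l e else 0 := fun e he => by
    simp [incMatrix_apply', incidenceSet, hl he]
  rw [linearCombination_apply, Finsupp.sum, Finset.sum_apply, Finset.sum_congr rfl hterm,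
    ← Finset.sum_filter]
  refine Finset.sum_subset (fun e he => ?_) (fun e he hne => ?_)
  · rw [Finset.mem_filter, Finsupp.mem_support_iff] at he
    exact hs e he.1 he.2
  · simpa [has e he] using hne

theorem not_existsUnique_fromEdgeSet_support_adj (hl : l ∈ supported ℤ ℤ G.edgeSet)
    (h0 : linearCombination ℤ (G.incMatrix ℤ).col l = 0) (a : V) :
    ¬ ∃! b, (fromEdgeSet (l.support : Set (Sym2 V))).Adj a b := by
  rintro ⟨b, hab, huniq⟩
  have hsum := linearCombination_incMatrix_col_apply hl a (s := {s(a, b)}) (fun e he ha => by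
    obtain ⟨b', hb', rfl⟩ := exists_fromEdgeSet_adj_of_apply_ne_zero hl he ha
    simp [huniq b' hb']) (by simp)
  rw [h0, Finset.sum_singleton] at hsum
  exact Finsupp.mem_support_iff.mp ((fromEdgeSet_adj _).mp hab).1 hsum.symm

theorem apply_add_apply_eq_zero_of_forall_adj (hl : l ∈ supported ℤ ℤ G.edgeSet)
    (h0 : linearCombination ℤ (G.incMatrix ℤ).col l = 0) {a x y : V} (hxy : x ≠ y)
    (h : ∀ b, (fromEdgeSet (l.support : Set (Sym2 V))).Adj a b → b = x ∨ b = y) :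
    l s(a, x) + l s(a, y) = 0 := by
  have hsum := linearCombination_incMatrix_col_apply hl a (s := {s(a, x), s(a, y)})
    (fun e he ha => by
      obtain ⟨b, hb, rfl⟩ := exists_fromEdgeSet_adj_of_apply_ne_zero hl he ha
      rcases h b hb with rfl | rfl <;> simp) (by simp)
  rwa [h0, Finset.sum_pair (mt Sym2.congr_right.mp hxy), eq_comm] at hsum

theorem even_length_of_isCycle_of_forall_adj_mem_edges (hl : l ∈ supported ℤ ℤ G.edgeSet)
    (h0 : linearCombination ℤ (G.incMatrix ℤ).col l = 0) {u : V}
    {c : (fromEdgeSet (l.support : Set (Sym2 V))).Walk u u} (hc : c.IsCycle)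
    (hclosed : ∀ v ∈ c.support, ∀ w, (fromEdgeSet (l.support : Set (Sym2 V))).Adj v w →
      s(v, w) ∈ c.edges) :
    Even c.length := by
  set f : ℕ → ℤ := fun i => l s(c.getVert i, c.getVert (i + 1))
  -- at each vertex of `c` the relation only sees the two cycle edges, so their coefficients cancel
  have hnbr : ∀ v ∈ c.support, ∀ {x y}, c.toSubgraph.neighborSet v = {x, y} → x ≠ y →
      l s(v, x) + l s(v, y) = 0 := fun v hv x y hxy hne =>
    apply_add_apply_eq_zero_of_forall_adj hl h0 hne fun w hw => by
      have : w ∈ c.toSubgraph.neighborSet v :=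
        Walk.adj_toSubgraph_iff_mem_edges.mpr (hclosed v hv w hw)
      simpa [hxy] using this
  have hstep : ∀ i, i + 1 < c.length → f (i + 1) = -f i := fun i hi => by
    have := hnbr _ (c.getVert_mem_support (i + 1))
      (hc.neighborSet_toSubgraph_internal i.succ_ne_zero hi)
      (hc.getVert_sub_one_ne_getVert_add_one hi.le)
    rw [Nat.add_sub_cancel, Sym2.eq_swap] at this
    simp only [f]
    linarith
  have halt : ∀ i < c.length, f i = (-1) ^ i * f 0 := by
    intro i hi
    induction i with
    | zero => simp
    | succ i ih =>
      rw [hstep i hi, ih (by omega), pow_succ]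
      ring
  have hwrap := hnbr u c.start_mem_support hc.neighborSet_toSubgraph_endpoint
    hc.snd_ne_penultimate
  by_contra hodd
  have hlen := hc.three_le_length
  have hlast := halt (c.length - 1) (by omega)
  rw [(Nat.Odd.sub_odd (Nat.not_even_iff_odd.mp hodd) odd_one).neg_one_pow, one_mul] at hlast
  have hf0 : l s(u, c.snd) = 0 := by
    simp only [f, Nat.sub_add_cancel (by omega : 1 ≤ c.length), c.getVert_length, c.getVert_zero,
      zero_add] at hlast hwrap ⊢
    rw [Sym2.eq_swap] at hlast
    linarith
  exact (Finsupp.mem_support_iff.mp ((fromEdgeSet_adj _).mp (c.adj_snd hc.not_nil)).1) hf0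

end Relations

end SimpleGraph

namespace FreimanPaper

open SimpleGraph

variable {V : Type*} {G : SimpleGraph V}

theorem AtMostOneOddCyclePerComponent.anti {H : SimpleGraph V} (hle : H ≤ G)
    (hG : AtMostOneOddCyclePerComponent G) : AtMostOneOddCyclePerComponent H := by
  refine ⟨fun u c hc => ?_, fun u v c c' hc hc' hr e => ?_⟩
  · simpa using hG.1 u (c.mapLe hle) ((Walk.isCycle_mapLe hle).mpr hc)
  · simpa [Walk.edges_mapLe_eq_edges] using hG.2 u v (c.mapLe hle) (c'.mapLe hle)
      ((Walk.isCycle_mapLe hle).mpr hc) ((Walk.isCycle_mapLe hle).mpr hc') (hr.mono hle) e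

noncomputable def edgeExponent (e : Sym2 V) : V →₀ ℕ :=
  Sym2.lift ⟨fun i j => single i 1 + single j 1, fun _ _ => add_comm _ _⟩ e

theorem edgeMonomial_eq_monomial_edgeExponent (K : Type*) [Field K] (e : Sym2 V) :
    edgeMonomial K e = monomial (edgeExponent e) 1 := by
  induction e using Sym2.ind with
  | _ i j => simp [edgeMonomial, edgeExponent, X, monomial_mul]

section Incidence

variable [DecidableEq V] [DecidableRel G.Adj]

theorem AtMostOneOddCyclePerComponent.linearIndepOn_incMatrix_col
    (hG : AtMostOneOddCyclePerComponent G) : LinearIndepOn ℤ (G.incMatrix ℤ).col G.edgeSet := by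
  rw [linearIndepOn_iff]
  intro l hl h0
  by_contra hne
  set H := fromEdgeSet (l.support : Set (Sym2 V))
  have hH := hG.anti fun a b hab => hl ((fromEdgeSet_adj _).mp hab).1
  have : Finite H.edgeSet :=
    l.support.finite_toSet.subset (by simp [H, edgeSet_fromEdgeSet])
  have hleaf := not_existsUnique_fromEdgeSet_support_adj hl h0
  obtain ⟨e, he⟩ := Finsupp.ne_iff.mp hne
  obtain ⟨b, hab, -⟩ := exists_fromEdgeSet_adj_of_apply_ne_zero hl he e.out_fst_mem
  obtain ⟨u, c, hc⟩ : ∃ (u : V) (c : H.Walk u u), c.IsCycle := by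
    simpa [IsAcyclic] using not_isAcyclic_of_forall_ne_not_existsUnique_adj hab fun v _ => hleaf v
  have heven := even_length_of_isCycle_of_forall_adj_mem_edges hl h0 hc
    fun v hv w hw => mem_edges_of_adj_of_mem_support hleaf hH.2 hc hv hw
  exact Nat.not_even_iff_odd.mpr (hH.1 u c hc) heven

theorem atMostOneOddCyclePerComponent_of_linearIndepOn
    (h : LinearIndepOn ℤ (G.incMatrix ℤ).col G.edgeSet) : AtMostOneOddCyclePerComponent G := by
  have hodd : ∀ u (c : G.Walk u u), c.IsCycle → Odd c.length := fun u c hc =>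
    Nat.not_even_iff_odd.mp fun heven =>
      not_linearIndepOn_incMatrix_col_of_isCycle_of_even hc heven h
  refine ⟨hodd, fun u v c c' hc hc' hr e => ⟨fun he => ?_, fun he => ?_⟩⟩ <;> by_contra he'
  · exact not_linearIndepOn_incMatrix_col_of_odd hc.isTrail (hodd u c hc) (hodd v c' hc') hr
      he he' h
  · exact not_linearIndepOn_incMatrix_col_of_odd hc'.isTrail (hodd v c' hc') (hodd u c hc)
      hr.symm he he' h

theorem linearIndepOn_incMatrix_col_iff :
    LinearIndepOn ℤ (G.incMatrix ℤ).col G.edgeSet ↔ AtMostOneOddCyclePerComponent G :=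
  ⟨atMostOneOddCyclePerComponent_of_linearIndepOn,
    AtMostOneOddCyclePerComponent.linearIndepOn_incMatrix_col⟩

theorem linearIndependent_edgeExponent_iff :
    LinearIndependent ℕ (fun e : G.edgeSet => edgeExponent (e : Sym2 V)) ↔
      LinearIndepOn ℤ (G.incMatrix ℤ).col G.edgeSet := by
  let φ : (V →₀ ℕ) →ₗ[ℕ] V → ℤ :=
    lcoeFun.comp (mapRange.linearMap (Nat.castAddMonoidHom ℤ).toNatLinearMap)
  have hφ : Function.Injective φ := fun f g h => Finsupp.ext fun a => by
    simpa [φ] using congrFun h a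
  have hcol : φ ∘ (fun e : G.edgeSet => edgeExponent (e : Sym2 V)) =
      fun e : G.edgeSet => (G.incMatrix ℤ).col e := by
    ext ⟨e, he⟩ : 1
    induction e using Sym2.ind with | _ a b =>
    rw [Function.comp_apply, incMatrix_col_of_adj he,
      show edgeExponent s(a, b) = single a 1 + single b 1 from rfl, map_add]
    simp [φ, Finsupp.single_eq_pi_single]
  rw [← φ.linearIndependent_iff_of_injOn hφ.injOn, hcol, LinearIndepOn,
    linearIndependent_nat_iff_int]

end Incidence

end FreimanPaper

open FreimanPaper in
theorem edgeRing_polynomialRing_iff_general {K : Type*} [Field K] {V : Type*}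
    (G : SimpleGraph V) :
    AlgebraicIndependent K (fun e : G.edgeSet => edgeMonomial K (e : Sym2 V)) ↔
      AtMostOneOddCyclePerComponent G := by
  classical
  simp_rw [edgeMonomial_eq_monomial_edgeExponent]
  rw [MvPolynomial.algebraicIndependent_monomial_iff, linearIndependent_edgeExponent_iff,
    linearIndepOn_incMatrix_col_iff]

open FreimanPaper in
/-- The edge ring `K[G] = K[x_i x_j : {i,j} ∈ E(G)]` of a finite simple graph `G` is a
polynomial ring — equivalently, the monomials `x_i x_j`, `{i,j} ∈ E(G)`, are
algebraically independent over `K` — if and only if each connected component of `G`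
contains at most one cycle, and this cycle is odd. -/
theorem edgeRing_polynomialRing_iff {K : Type*} [Field K] {V : Type*} [Fintype V]
    (G : SimpleGraph V) :
    AlgebraicIndependent K (fun e : G.edgeSet => edgeMonomial K (e : Sym2 V)) ↔
      AtMostOneOddCyclePerComponent G :=
  edgeRing_polynomialRing_iff_general G
end
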